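/- arXiv:2202.03602 — 2 statements merged into one kernel-verified Lean document; each statement's English description precedes it below -/
import Mathlib

section
/- Let w_L < w_H, Δ ∈ ℝ, and psychic costs c_D > c₁₀ > c₀₀ ≥ 0. Suppose the fraction of low-earners f satisfies f̃(c₁₀) < f < f̃(c₀₀), where f̃(κ) := (c_D − κ)/((w_H − w_L) + c_D − κ). Then the firm strictly prefers separating offers when workers are asked (withholding cost c₁₀) and strictly prefers pooling offers when workers are not asked (withholding cost c₀₀); hence the equilibrium disclosure rate equals 1 − f > 0 when asked and 0 when not asked. -/
theorem stmt_4 (wL wH Δ cD c10 c00 f : ℝ) (hw : wL < wH)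
    (hc00 : 0 ≤ c00) (hc1 : c00 < c10) (hc2 : c10 < cD)
    (hf : f ∈ Set.Ioo (0 : ℝ) 1)
    (hf1 : (cD - c10) / ((wH - wL) + cD - c10) < f)
    (hf2 : f < (cD - c00) / ((wH - wL) + cD - c00)) :
    -- asked: separating strictly cheaper than pooling
    (f * (wL + Δ + c10) + (1 - f) * (wH + Δ + cD) < wH + Δ + c10) ∧
    -- not asked: pooling strictly cheaper than separating
    (wH + Δ + c00 < f * (wL + Δ + c00) + (1 - f) * (wH + Δ + cD)) ∧
    -- disclosure rate 1 - f when asked is strictly positive, 0 when not asked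
    (0 < 1 - f) := by
  obtain ⟨hf0, hf1'⟩ := hf
  have hd1 : (0:ℝ) < (wH - wL) + cD - c10 := by linarith
  have hd2 : (0:ℝ) < (wH - wL) + cD - c00 := by linarith
  rw [div_lt_iff₀ hd1] at hf1
  rw [lt_div_iff₀ hd2] at hf2
  refine ⟨by nlinarith, by nlinarith, by linarith⟩
end

section
/- Let w_L < w_H, Δ ∈ ℝ, c_D > κ ≥ 0, and f ∈ (0,1) with f > f̃(κ) := (c_D − κ)/((w_H − w_L) + c_D − κ). Then the average worker wage under pooling, w_H + Δ + κ, strictly exceeds the average wage under separating offers, f(w_L + Δ + κ) + (1 − f)(w_H + Δ + c_D). -/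
theorem stmt_7 (wL wH Δ cD κ f : ℝ) (hw : wL < wH) (hκ0 : 0 ≤ κ) (hκ : κ < cD)
    (hf : f ∈ Set.Ioo (0 : ℝ) 1)
    (hthr : (cD - κ) / ((wH - wL) + cD - κ) < f) :
    f * (wL + Δ + κ) + (1 - f) * (wH + Δ + cD) < wH + Δ + κ := by
  have hD : 0 < (wH - wL) + cD - κ := by linarith
  have := (div_lt_iff₀ hD).mp hthr
  nlinarith [hf.1, hf.2]
end
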